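/- arXiv:2505.15149 — 7 statements merged into one kernel-verified Lean document; each statement's English description precedes it below -/
import Mathlib

section
/- If G is a graph and uv is a pendent edge of u (i.e., v is a vertex whose only neighbor is u), then the deficiency of G equals the deficiency of the graph obtained from G by deleting u and v. Here the deficiency def(G) is the number of vertices not saturated by a maximum matching of G. -/
open SimpleGraph

/-- The deficiency of a graph: number of vertices left unsaturated by a maximum matching,
i.e. `|V| - 2·ν(G)`, expressed as `|V|` minus the maximum number of saturated vertices. -/
noncomputable def deficiency {V : Type*} (G : SimpleGraph V) : ℕ :=
  Nat.card V - sSup {n | ∃ M : G.Subgraph, M.IsMatching ∧ M.verts.ncard = n}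

/-!
Every matching of `G - u - v` extends by the edge `uv` to a matching of `G` saturating two more
vertices. Conversely, a matching of `G` loses at most two saturated vertices when we delete `u`
together with its partner: `v` can only be matched to `u`, so afterwards neither `u` nor `v` is
saturated. Hence the maximum numbers of saturated vertices differ by exactly two, as do the
numbers of vertices.
-/

lemma Nat.sSup_eq_add_of_forall {S T : Set ℕ} (k : ℕ) (hT : T.Nonempty) (hS : BddAbove S)
    (hTS : ∀ n ∈ T, n + k ∈ S) (hST : ∀ n ∈ S, ∃ m ∈ T, n ≤ m + k) :
    sSup S = sSup T + k := by
  have hT' : BddAbove T := by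
    obtain ⟨b, hb⟩ := hS
    exact ⟨b, fun n hn => (Nat.le_add_right n k).trans (hb (hTS n hn))⟩
  apply le_antisymm
  · refine csSup_le (hT.image (· + k) |>.mono ?_) fun n hn => ?_
    · rintro _ ⟨n, hn, rfl⟩
      exact hTS n hn
    · obtain ⟨m, hm, hnm⟩ := hST n hn
      exact hnm.trans (Nat.add_le_add_right (le_csSup hT' hm) k)
  · exact le_csSup hS (hTS _ (Nat.sSup_mem hT hT'))

lemma Nat.card_compl_pair {V : Type*} [Finite V] {u v : V} (huv : u ≠ v) :
    Nat.card ({u, v}ᶜ : Set V) = Nat.card V - 2 := by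
  rw [Nat.card_coe_set_eq, Set.ncard_compl, Set.ncard_pair huv]

lemma Set.ncard_le_ncard_sdiff_pair_add_two {V : Type*} (s : Set V) (a b : V) :
    s.ncard ≤ (s \ {a, b}).ncard + 2 := by
  have hab : ({a, b} : Set V).ncard ≤ 2 :=
    (Set.ncard_insert_le a {b}).trans_eq (by rw [Set.ncard_singleton])
  exact (Set.ncard_le_ncard_sdiff_add_ncard s {a, b}).trans (Nat.add_le_add_left hab _)

namespace SimpleGraph.Subgraph

variable {V W : Type*} {G : SimpleGraph V}

lemma IsMatching.deleteVerts_pair {M : G.Subgraph} (hM : M.IsMatching) {a b : V}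
    (hab : M.Adj a b) : (M.deleteVerts {a, b}).IsMatching := by
  rintro x ⟨hx, hxab⟩
  obtain ⟨w, hw, hw_unique⟩ := hM hx
  have hw_ab : w ∉ ({a, b} : Set V) := by
    rintro (rfl | rfl)
    · exact hxab (.inr (hM.eq_of_adj_left hw.symm hab))
    · exact hxab (.inl (hM.eq_of_adj_right hab hw).symm)
  exact ⟨w, deleteVerts_adj.mpr ⟨hx, hxab, M.edge_vert hw.symm, hw_ab, hw⟩,
    fun y hy => hw_unique y (deleteVerts_adj.mp hy).2.2.2.2⟩

lemma IsMatching.comap {G' : SimpleGraph W} {N : G'.Subgraph} (hN : N.IsMatching)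
    (f : G ↪g G') (hN_range : N.verts ⊆ Set.range f) : (N.comap f.toHom).IsMatching := by
  intro a ha
  obtain ⟨w, hw, hw_unique⟩ := hN ha
  obtain ⟨b, rfl⟩ := hN_range (N.edge_vert hw.symm)
  exact ⟨b, ⟨f.map_adj_iff.mp (N.adj_sub hw), hw⟩, fun c hc => f.injective (hw_unique _ hc.2)⟩

lemma IsMatching.exists_verts_subset_compl_pair {M : G.Subgraph} (hM : M.IsMatching) {u v : V}
    (hpendent : G.neighborSet v = {u}) :
    ∃ N : G.Subgraph, N.IsMatching ∧ N.verts ⊆ {u, v}ᶜ ∧ M.verts.ncard ≤ N.verts.ncard + 2 := by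
  have hv_adj : ∀ y, G.Adj v y → y = u := fun y hy => by
    have hy' : y ∈ G.neighborSet v := hy
    rwa [hpendent] at hy'
  by_cases hu : u ∈ M.verts
  · obtain ⟨w, huw, -⟩ := hM hu
    refine ⟨M.deleteVerts {u, w}, hM.deleteVerts_pair huw, ?_,
      Set.ncard_le_ncard_sdiff_pair_add_two M.verts u w⟩
    rintro x ⟨hx, hx_uw⟩ (rfl | rfl)
    · exact hx_uw (.inl rfl)
    · obtain ⟨y, hxy, -⟩ := hM hx
      obtain rfl := hv_adj y (M.adj_sub hxy)
      exact hx_uw (.inr (hM.eq_of_adj_left huw hxy.symm).symm)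
  · refine ⟨M, hM, ?_, Nat.le_add_right _ 2⟩
    rintro x hx (rfl | rfl)
    · exact hu hx
    · obtain ⟨y, hxy, -⟩ := hM hx
      obtain rfl := hv_adj y (M.adj_sub hxy)
      exact hu (M.edge_vert hxy.symm)

end SimpleGraph.Subgraph

namespace SimpleGraph

variable {V : Type*} (G : SimpleGraph V)

def matchingSizes : Set ℕ := {n | ∃ M : G.Subgraph, M.IsMatching ∧ M.verts.ncard = n}

lemma deficiency_eq_card_sub_sSup_matchingSizes :
    deficiency G = Nat.card V - sSup G.matchingSizes := rfl

lemma matchingSizes_nonempty : G.matchingSizes.Nonempty :=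
  ⟨0, ⊥, fun _ hx => hx.elim, Set.ncard_empty V⟩

lemma bddAbove_matchingSizes [Finite V] : BddAbove G.matchingSizes := by
  refine ⟨Nat.card V, ?_⟩
  rintro _ ⟨M, -, rfl⟩
  exact (Set.ncard_le_ncard (Set.subset_univ _)).trans_eq (Set.ncard_univ V)

variable {G}

lemma ncard_mem_matchingSizes_induce {s : Set V} {N : G.Subgraph} (hN : N.IsMatching)
    (hN_s : N.verts ⊆ s) : N.verts.ncard ∈ (G.induce s).matchingSizes := by
  let f := Embedding.induce (G := G) s
  have hN_range : N.verts ⊆ Set.range f := fun x hx => ⟨⟨x, hN_s hx⟩, rfl⟩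
  exact ⟨_, hN.comap f hN_range,
    Set.ncard_preimage_of_injective_subset_range f.injective hN_range⟩

lemma add_two_mem_matchingSizes_of_mem_induce [Finite V] {s : Set V} {a b : V} (hab : G.Adj a b)
    (ha : a ∉ s) (hb : b ∉ s) {n : ℕ} (hn : n ∈ (G.induce s).matchingSizes) :
    n + 2 ∈ G.matchingSizes := by
  obtain ⟨M', hM', rfl⟩ := hn
  let f := Embedding.induce (G := G) s
  have hM'_map : (M'.map f.toHom).IsMatching := hM'.map f.toHom f.injective
  have hverts : (M'.map f.toHom).verts = Subtype.val '' M'.verts := rfl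
  have hdisj : Disjoint (Subtype.val '' M'.verts) ({a, b} : Set V) := by
    rw [Set.disjoint_left]
    rintro _ ⟨⟨x, hx⟩, -, rfl⟩ (rfl | rfl)
    exacts [ha hx, hb hx]
  refine ⟨M'.map f.toHom ⊔ G.subgraphOfAdj hab, hM'_map.sup (.subgraphOfAdj hab) ?_, ?_⟩
  · rwa [support_subgraphOfAdj, hM'_map.support_eq_verts, hverts]
  · rw [Subgraph.verts_sup, subgraphOfAdj_verts, hverts, Set.ncard_union_eq hdisj,
      Set.ncard_image_of_injective _ Subtype.val_injective, Set.ncard_pair hab.ne]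

lemma exists_mem_matchingSizes_induce_le_add_two {u v : V} (hpendent : G.neighborSet v = {u})
    {n : ℕ} (hn : n ∈ G.matchingSizes) :
    ∃ m ∈ (G.induce {u, v}ᶜ).matchingSizes, n ≤ m + 2 := by
  obtain ⟨M, hM, rfl⟩ := hn
  obtain ⟨N, hN, hN_compl, hMN⟩ := hM.exists_verts_subset_compl_pair hpendent
  exact ⟨_, ncard_mem_matchingSizes_induce hN hN_compl, hMN⟩

end SimpleGraph

theorem stmt_0 {V : Type*} [Fintype V] (G : SimpleGraph V) (u v : V)
    (hpendent : G.neighborSet v = {u}) :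
    deficiency G = deficiency (G.induce ({u, v}ᶜ : Set V)) := by
  have huv : G.Adj u v := by
    have hu : u ∈ G.neighborSet v := by rw [hpendent]; rfl
    exact hu.symm
  have hsSup : sSup G.matchingSizes = sSup (G.induce {u, v}ᶜ).matchingSizes + 2 :=
    Nat.sSup_eq_add_of_forall 2 (matchingSizes_nonempty _) G.bddAbove_matchingSizes
      (fun _ => add_two_mem_matchingSizes_of_mem_induce huv (by simp) (by simp))
      (fun _ => exists_mem_matchingSizes_induce_le_add_two hpendent)
  rw [deficiency_eq_card_sub_sSup_matchingSizes, deficiency_eq_card_sub_sSup_matchingSizes,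
    hsSup, Nat.card_compl_pair huv.ne]
  omega
end

section
/- Let G be a graph with vertex partition V(G) = X ∪ Y such that Y ⊆ N(X). Then there exists a matching M in G such that with Y_M = Y \ V(M) and X_M = {x ∈ X \ V(M) : N(x) ∩ Y_M ≠ ∅}, one has: Y_M ⊆ N(X_M), Y_M is independent, and for every x ∈ X_M there exist two distinct vertices y₁, y₂ ∈ Y_M whose only neighbor in (X ∪ Y) \ V(M) is x. -/
/-!
Take a matching `M` that is maximal (as a subgraph) among the matchings with
`Y \ V(M) ⊆ N(X \ V(M))`; one exists since the empty matching qualifies. Adding an edge between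
two unmatched vertices always enlarges `M`, so no such edge may preserve this invariant. An edge
inside `Y \ V(M)` would preserve it, so `Y \ V(M)` is independent. If some `x ∈ X_M` had at most
one neighbour `y` with `N_{G_M}(y) = {x}`, then adding the edge from `x` to that `y` (or to any
unmatched neighbour in `Y`) would preserve it as well.
-/

open SimpleGraph

namespace SimpleGraph.Subgraph

variable {V : Type*} {G : SimpleGraph V} {M : G.Subgraph} {X Y : Set V} {a b x : V}

def IsAdmissibleMatching (X Y : Set V) (M : G.Subgraph) : Prop :=
  M.IsMatching ∧ ∀ y ∈ Y \ M.verts, ∃ x ∈ X \ M.verts, G.Adj x y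

/-- `N_{G_M}(y) = {x}`. -/
def IsSoleUnmatchedNeighbor (M : G.Subgraph) (x y : V) : Prop :=
  ∀ z, z ∉ M.verts → (G.Adj y z ↔ z = x)

lemma isAdmissibleMatching_bot (hYN : ∀ y ∈ Y, ∃ x ∈ X, G.Adj x y) :
    (⊥ : G.Subgraph).IsAdmissibleMatching X Y :=
  ⟨fun _ hv ↦ hv.elim, fun y hy ↦ by simpa using hYN y hy.1⟩

lemma IsMatching.sup_subgraphOfAdj (hM : M.IsMatching) (hab : G.Adj a b)
    (ha : a ∉ M.verts) (hb : b ∉ M.verts) : (M ⊔ G.subgraphOfAdj hab).IsMatching := by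
  refine hM.sup (.subgraphOfAdj hab) ?_
  rw [hM.support_eq_verts, support_subgraphOfAdj, Set.disjoint_insert_right,
    Set.disjoint_singleton_right]
  exact ⟨ha, hb⟩

lemma lt_sup_subgraphOfAdj (hab : G.Adj a b) (ha : a ∉ M.verts) :
    M < M ⊔ G.subgraphOfAdj hab :=
  lt_of_le_of_ne le_sup_left fun h ↦ ha (h ▸ by simp)

lemma IsAdmissibleMatching.sup_subgraphOfAdj (hM : M.IsAdmissibleMatching X Y)
    (hab : G.Adj a b) (ha : a ∉ M.verts) (hb : b ∉ M.verts)
    (hY : ∀ y ∈ Y \ M.verts, y ≠ a → y ≠ b → ∃ x ∈ X \ M.verts, x ≠ a ∧ x ≠ b ∧ G.Adj x y) :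
    (M ⊔ G.subgraphOfAdj hab).IsAdmissibleMatching X Y := by
  refine ⟨hM.1.sup_subgraphOfAdj hab ha hb, fun y hy ↦ ?_⟩
  simp only [verts_sup, subgraphOfAdj_verts, Set.mem_sdiff, Set.mem_union, Set.mem_insert_iff,
    Set.mem_singleton_iff, not_or] at hy ⊢
  obtain ⟨x, hx, hxa, hxb, hxy⟩ := hY y ⟨hy.1, hy.2.1⟩ hy.2.2.1 hy.2.2.2
  exact ⟨x, ⟨hx.1, hx.2, hxa, hxb⟩, hxy⟩

lemma exists_maximal_isAdmissibleMatching [Finite V] (hYN : ∀ y ∈ Y, ∃ x ∈ X, G.Adj x y) :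
    ∃ M : G.Subgraph, Maximal (IsAdmissibleMatching X Y) M :=
  exists_maximal_of_wellFoundedGT _ ⟨⊥, isAdmissibleMatching_bot hYN⟩

lemma not_isAdmissibleMatching_sup_subgraphOfAdj_of_maximal
    (hM : Maximal (IsAdmissibleMatching X Y) M) (hab : G.Adj a b) (ha : a ∉ M.verts) :
    ¬ (M ⊔ G.subgraphOfAdj hab).IsAdmissibleMatching X Y :=
  fun h ↦ (hM.not_gt h (lt_sup_subgraphOfAdj hab ha)).elim

lemma not_adj_of_maximal_isAdmissibleMatching (hM : Maximal (IsAdmissibleMatching X Y) M)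
    (hdisj : Disjoint X Y) {y₁ y₂ : V} (hy₁ : y₁ ∈ Y \ M.verts) (hy₂ : y₂ ∈ Y \ M.verts) :
    ¬ G.Adj y₁ y₂ := fun hadj ↦ by
  refine not_isAdmissibleMatching_sup_subgraphOfAdj_of_maximal hM hadj hy₁.2 <|
    hM.prop.sup_subgraphOfAdj hadj hy₁.2 hy₂.2 fun y hy _ _ ↦ ?_
  obtain ⟨x, hx, hxy⟩ := hM.prop.2 y hy
  exact ⟨x, hx, hdisj.ne_of_mem hx.1 hy₁.1, hdisj.ne_of_mem hx.1 hy₂.1, hxy⟩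

lemma exists_two_isSoleUnmatchedNeighbor_of_maximal (hM : Maximal (IsAdmissibleMatching X Y) M)
    (hunion : X ∪ Y = Set.univ) (hdisj : Disjoint X Y) (hx : x ∈ X \ M.verts)
    (hxY : ∃ y ∈ Y \ M.verts, G.Adj x y) :
    ∃ y₁ y₂, y₁ ∈ Y \ M.verts ∧ y₂ ∈ Y \ M.verts ∧ y₁ ≠ y₂ ∧
      M.IsSoleUnmatchedNeighbor x y₁ ∧ M.IsSoleUnmatchedNeighbor x y₂ := by
  by_contra! hcon
  obtain ⟨y₀, hy₀, hxy₀, hsole⟩ : ∃ y₀ ∈ Y \ M.verts, G.Adj x y₀ ∧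
      ∀ y ∈ Y \ M.verts, M.IsSoleUnmatchedNeighbor x y → y = y₀ := by
    by_cases h : ∃ y ∈ Y \ M.verts, M.IsSoleUnmatchedNeighbor x y
    · obtain ⟨y₀, hy₀, hy₀x⟩ := h
      exact ⟨y₀, hy₀, ((hy₀x x hx.2).2 rfl).symm, fun y hy hyx ↦
        by_contra fun hne ↦ hcon y y₀ hy hy₀ hne hyx hy₀x⟩
    · obtain ⟨y₀, hy₀, hxy₀⟩ := hxY
      exact ⟨y₀, hy₀, hxy₀, fun y hy hyx ↦ (h ⟨y, hy, hyx⟩).elim⟩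
  refine not_isAdmissibleMatching_sup_subgraphOfAdj_of_maximal hM hxy₀ hx.2 <|
    hM.prop.sup_subgraphOfAdj hxy₀ hx.2 hy₀.2 fun y hy _ hyy₀ ↦ ?_
  obtain ⟨x', hx', hx'y⟩ := hM.prop.2 y hy
  by_cases hx'x : x' = x
  · -- `y ≠ y₀` is not private to `x`, so it has a second unmatched neighbour, lying in `X`
    subst hx'x
    obtain ⟨z, hz, hyz, hzx⟩ : ∃ z, z ∉ M.verts ∧ G.Adj y z ∧ z ≠ x' := by
      by_contra! h
      exact hyy₀ (hsole y hy fun z hz ↦ ⟨h z hz, fun hzx ↦ hzx ▸ hx'y.symm⟩)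
    have hzX : z ∈ X := ((Set.mem_union _ _ _).1 (hunion ▸ Set.mem_univ z)).resolve_right
      fun hzY ↦ not_adj_of_maximal_isAdmissibleMatching hM hdisj hy ⟨hzY, hz⟩ hyz
    exact ⟨z, ⟨hzX, hz⟩, hzx, hdisj.ne_of_mem hzX hy₀.1, hyz.symm⟩
  · exact ⟨x', hx', hx'x, hdisj.ne_of_mem hx'.1 hy₀.1, hx'y⟩

end SimpleGraph.Subgraph

theorem stmt_2 {V : Type*} [Fintype V] (G : SimpleGraph V) (X Y : Set V)
    (hunion : X ∪ Y = Set.univ) (hdisj : Disjoint X Y)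
    (hYN : ∀ y ∈ Y, ∃ x ∈ X, G.Adj x y) :
    ∃ M : G.Subgraph, M.IsMatching ∧
      -- (1) Y_M ⊆ N(X_M)
      (∀ y ∈ Y \ M.verts, ∃ x, (x ∈ X \ M.verts ∧ ∃ y' ∈ Y \ M.verts, G.Adj x y') ∧ G.Adj x y) ∧
      -- (2) Y_M is an independent set
      (∀ y₁ ∈ Y \ M.verts, ∀ y₂ ∈ Y \ M.verts, ¬ G.Adj y₁ y₂) ∧
      -- (3) every x ∈ X_M has two private neighbors y₁ ≠ y₂ in Y_M whose only
      -- neighbor outside V(M) is x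
      (∀ x, x ∈ X \ M.verts → (∃ y' ∈ Y \ M.verts, G.Adj x y') →
        ∃ y₁ y₂, y₁ ∈ Y \ M.verts ∧ y₂ ∈ Y \ M.verts ∧ y₁ ≠ y₂ ∧
          (∀ z, z ∉ M.verts → (G.Adj y₁ z ↔ z = x)) ∧
          (∀ z, z ∉ M.verts → (G.Adj y₂ z ↔ z = x))) := by
  obtain ⟨M, hM⟩ := Subgraph.exists_maximal_isAdmissibleMatching hYN
  refine ⟨M, hM.prop.1, fun y hy ↦ ?_,
    fun _ hy₁ _ hy₂ ↦ Subgraph.not_adj_of_maximal_isAdmissibleMatching hM hdisj hy₁ hy₂,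
    fun x hx hxY ↦ Subgraph.exists_two_isSoleUnmatchedNeighbor_of_maximal hM hunion hdisj hx hxY⟩
  obtain ⟨x, hx, hxy⟩ := hM.prop.2 y hy
  exact ⟨x, ⟨hx, y, hy, hxy⟩, hxy⟩
end

section
/- Every nontrivial deficiency-critical connected graph G contains a snail horn: a vertex x with two distinct neighbors y, z such that N(y) = N(z) = {x}. -/
open SimpleGraph

/-!
Adding an edge `uv` to a maximum matching of `G - u - v` shows `def G ≤ def (G - u - v)`, so
criticality forces `G - u - v` to be disconnected for every edge `uv`; and `def G > def K₁ = 1`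
forces `|V| ≥ 4`.

Say `X` hangs at `c` if `c ∉ X` is the only neighbour of `X` outside `X`. Take a path inside
`X ∪ {c}`, ending at `c`, that cannot be prolonged at its first vertex `y`. If its first edge `yu`
avoids `c`, then every neighbour of `y` other than `u` is joined to `c` along the rest of the path,
so a component of `G - y - u` missing `c` is a smaller set hanging at `u`; otherwise `y` is pendant.
Hence every hanging set contains a pendant vertex. Now let `y₀ ∉ X` be pendant at `c` with `X`
hanging at `c`, and let `y ∈ X` be pendant at `x`. Either `x = c`, and `y₀, y` form a snail horn,
or `x ∈ X`, and a component of `G - y - x` missing `c` is a smaller set hanging at `x`, with `y`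
pendant at `x` outside it.
-/

namespace SimpleGraph

variable {V : Type*} {G : SimpleGraph V} {s t T X : Set V} {a b c v w : V}

def ReachableIn (G : SimpleGraph V) (s : Set V) (a b : V) : Prop :=
  ∃ p : G.Walk a b, ∀ x ∈ p.support, x ∈ s

namespace ReachableIn

theorem refl (ha : a ∈ s) : G.ReachableIn s a a :=
  ⟨.nil, by simpa using ha⟩

theorem right_mem (h : G.ReachableIn s a b) : b ∈ s :=
  h.elim fun p hp => hp b p.end_mem_support

theorem symm (h : G.ReachableIn s a b) : G.ReachableIn s b a :=
  h.elim fun p hp => ⟨p.reverse, fun x hx => hp x (by simpa using hx)⟩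

theorem trans (hab : G.ReachableIn s a b) (hbc : G.ReachableIn s b c) : G.ReachableIn s a c := by
  obtain ⟨p, hp⟩ := hab
  obtain ⟨q, hq⟩ := hbc
  refine ⟨p.append q, fun x hx => ?_⟩
  rcases (Walk.mem_support_append_iff p q).1 hx with hx | hx
  exacts [hp x hx, hq x hx]

theorem cons (hab : G.Adj a b) (ha : a ∈ s) (h : G.ReachableIn s b c) : G.ReachableIn s a c :=
  h.elim fun p hp => ⟨.cons hab p, fun x hx => (List.mem_cons.1 hx).elim (· ▸ ha) (hp x)⟩

theorem concat (h : G.ReachableIn s a b) (hbc : G.Adj b c) (hc : c ∈ s) : G.ReachableIn s a c :=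
  (cons hbc.symm hc h.symm).symm

theorem mono (hst : s ⊆ t) (h : G.ReachableIn s a b) : G.ReachableIn t a b :=
  h.elim fun p hp => ⟨p, fun x hx => hst (hp x hx)⟩

theorem of_mem_support (p : G.Walk a b) (hp : ∀ x ∈ p.support, x ∈ s) (hv : v ∈ p.support) :
    G.ReachableIn s v b := by
  classical
  exact ⟨p.dropUntil v hv, fun x hx => hp x (p.support_dropUntil_subset_support hv hx)⟩

theorem mem_of_forall_adj_mem (h : G.ReachableIn s a b) (ha : a ∈ T)
    (hT : ∀ x ∈ T, ∀ y ∈ s, G.Adj x y → y ∈ T) : b ∈ T := by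
  by_contra hb
  obtain ⟨p, hp⟩ := h
  obtain ⟨d, hd, hd₁, hd₂⟩ := p.exists_boundary_dart T ha hb
  exact hd₂ (hT _ hd₁ _ (hp _ (p.dart_snd_mem_support_of_mem_darts hd)) d.adj)

end ReachableIn

theorem Connected.mem_of_forall_adj_mem (hG : G.Connected) (ha : a ∈ T)
    (hT : ∀ x ∈ T, ∀ y, G.Adj x y → y ∈ T) (b : V) : b ∈ T :=
  ReachableIn.mem_of_forall_adj_mem (s := Set.univ) ⟨(hG a b).some, fun _ _ => trivial⟩ ha
    fun x hx y _ => hT x hx y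

theorem connected_induce_of_forall_reachableIn (hc : c ∈ s)
    (h : ∀ w ∈ s, G.ReachableIn s c w) : (G.induce s).Connected :=
  (connected_iff_exists_forall_reachable _).2
    ⟨⟨c, hc⟩, fun ⟨w, hw⟩ => (h w hw).elim fun p hp => ⟨p.induce s hp⟩⟩

theorem exists_isPath_forall_adj_mem_support [Finite V] (hc : c ∈ s) :
    ∃ (y : V) (p : G.Walk y c), p.IsPath ∧ (∀ x ∈ p.support, x ∈ s) ∧
      ∀ z ∈ s, G.Adj y z → z ∈ p.support := by
  have := Fintype.ofFinite V
  let L := {n | ∃ (y : V) (p : G.Walk y c), p.IsPath ∧ (∀ x ∈ p.support, x ∈ s) ∧ p.length = n}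
  have hL : BddAbove L := ⟨Fintype.card V, by rintro _ ⟨y, p, hp, -, rfl⟩; exact hp.length_lt.le⟩
  have hnil : 0 ∈ L := ⟨c, .nil, .nil, by simpa using hc, rfl⟩
  obtain ⟨y, p, hp, hps, hlen⟩ := Nat.sSup_mem ⟨0, hnil⟩ hL
  refine ⟨y, p, hp, hps, fun z hz hyz => by_contra fun hzp => ?_⟩
  have hlong : p.length + 1 ∈ L := by
    refine ⟨z, .cons hyz.symm p, hp.cons hzp, fun x hx => ?_, rfl⟩
    exact (List.mem_cons.1 hx).elim (· ▸ hz) (hps x)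
  have := le_csSup hL hlong
  omega

/-- A nonempty union of components of `G - c`. -/
def IsHangingAt (G : SimpleGraph V) (c : V) (X : Set V) : Prop :=
  X.Nonempty ∧ c ∉ X ∧ ∀ a ∈ X, G.neighborSet a ⊆ insert c X

namespace IsHangingAt

theorem exists_adj (hG : G.Connected) (hX : G.IsHangingAt c X) : ∃ x ∈ X, G.Adj x c := by
  by_contra! h
  obtain ⟨a, ha⟩ := hX.1
  refine hX.2.1 (hG.mem_of_forall_adj_mem ha (fun x hx y hxy => ?_) c)
  rcases hX.2.2 x hx hxy with rfl | hy
  exacts [absurd hxy (h x hx), hy]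

theorem reachableIn_compl (hG : G.Connected) (hX : G.IsHangingAt c X) (hv : v ∉ X) :
    G.ReachableIn Xᶜ v c := by
  refine (hG.mem_of_forall_adj_mem (T := {v | v ∈ X ∨ G.ReachableIn Xᶜ v c})
    (Or.inr (.refl hX.2.1)) ?_ v).resolve_left hv
  intro x hx y hxy
  by_cases hy : y ∈ X
  · exact Or.inl hy
  rcases hx with hx | hx
  · rcases hX.2.2 x hx hxy with rfl | hy'
    exacts [Or.inr (.refl hX.2.1), absurd hy' hy]
  · exact Or.inr (hx.cons hxy.symm hy)

end IsHangingAt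

theorem isHangingAt_setOf_reachableIn (hw : w ≠ c) :
    G.IsHangingAt c {v | G.ReachableIn {c}ᶜ w v} := by
  refine ⟨⟨w, .refl hw⟩, fun h => h.right_mem rfl, fun a ha b hab => ?_⟩
  by_cases hb : b = c
  · exact Or.inl hb
  · exact Or.inr (ha.concat hab hb)

/-- Here `G - u - v` may be empty, which `Connected` excludes. -/
def IsEdgeSeparating (G : SimpleGraph V) : Prop :=
  ∀ u v, G.Adj u v → ¬ (G.induce {u, v}ᶜ).Connected

theorem IsHangingAt.exists_ssubset_of_adj (hsep : G.IsEdgeSeparating) (hG : G.Connected)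
    (hX : G.IsHangingAt c X) (hab : G.Adj a b) (ha : a ∈ X) (hb : b ∈ X)
    (hnbr : ∀ v, G.Adj a v → v = b ∨ G.ReachableIn {a, b}ᶜ c v) :
    ∃ W ⊂ X, G.IsHangingAt b W ∧ a ∉ W := by
  have hc : c ∈ ({a, b}ᶜ : Set V) := by
    rintro (rfl | rfl)
    exacts [hX.2.1 ha, hX.2.1 hb]
  obtain ⟨w, hw, hcw⟩ : ∃ w ∈ ({a, b}ᶜ : Set V), ¬ G.ReachableIn {a, b}ᶜ c w := by
    by_contra! h
    exact hsep a b hab (connected_induce_of_forall_reachableIn hc h)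
  set W := {v | G.ReachableIn {a, b}ᶜ w v}
  have hWab : W ⊆ {a, b}ᶜ := fun v hv => hv.right_mem
  have hWX : W ⊆ X := by
    intro v hv
    by_contra hvX
    have hXc : Xᶜ ⊆ {a, b}ᶜ := Set.compl_subset_compl.2 (Set.insert_subset ha (by simpa using hb))
    exact hcw (hv.trans ((hX.reachableIn_compl hG hvX).mono hXc)).symm
  refine ⟨W, ⟨hWX, fun h => hWab (h hb) (by simp)⟩, ⟨⟨w, .refl hw⟩, fun h => hWab h (by simp),
    fun v hv x hvx => ?_⟩, fun h => hWab h (by simp)⟩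
  by_cases hx : x ∈ ({a, b}ᶜ : Set V)
  · exact Or.inr (hv.concat hvx hx)
  simp only [Set.mem_compl_iff, Set.mem_insert_iff, Set.mem_singleton_iff, not_or,
    not_and_or, not_not] at hx
  rcases hx with rfl | rfl
  · rcases hnbr v hvx.symm with rfl | hcv
    · exact absurd (hWab hv) (by simp)
    · exact absurd (hv.trans hcv.symm).symm hcw
  · exact Or.inl rfl

theorem IsHangingAt.exists_neighborSet_eq_or_exists_ssubset [Finite V]
    (hsep : G.IsEdgeSeparating) (hG : G.Connected) (hX : G.IsHangingAt c X) :
    (∃ y ∈ X, G.neighborSet y = {c}) ∨ ∃ b ∈ X, ∃ W ⊂ X, G.IsHangingAt b W := by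
  obtain ⟨y, p, hp, hps, hmax⟩ :=
    exists_isPath_forall_adj_mem_support (G := G) (Set.mem_insert c X)
  have hNy (hy : y ∈ X) (z : V) (hz : G.Adj y z) : z ∈ p.support := hmax z (hX.2.2 y hy hz) hz
  cases p with
  | nil =>
    obtain ⟨x, hx, hxc⟩ := hX.exists_adj hG
    have hxc' : x = c := by simpa using hmax x (Or.inr hx) hxc.symm
    exact absurd (hxc' ▸ hx) hX.2.1
  | @cons _ u _ hyu q =>
    cases q with
    | nil =>
      have hyX : y ∈ X := (hps y (by simp)).resolve_left hyu.ne
      refine .inl ⟨y, hyX, Set.ext fun z => ⟨fun hz => ?_, ?_⟩⟩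
      · simpa [hz.ne'] using hNy hyX z hz
      · rintro rfl
        exact hyu
    | cons _ q =>
      simp only [Walk.cons_isPath_iff, Walk.support_cons, List.mem_cons, not_or] at hp
      obtain ⟨⟨-, hu⟩, -, hy⟩ := hp
      have hyX : y ∈ X := (hps y (by simp)).resolve_left (fun h => hy (h ▸ q.end_mem_support))
      have huX : u ∈ X := (hps u (by simp)).resolve_left (fun h => hu (h ▸ q.end_mem_support))
      have hq : ∀ x ∈ q.support, x ∈ ({y, u}ᶜ : Set V) := by
        rintro x hx (rfl | rfl)
        exacts [hy hx, hu hx]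
      refine .inr ⟨u, huX, ?_⟩
      obtain ⟨W, hWX, hW, -⟩ := hX.exists_ssubset_of_adj hsep hG hyu hyX huX fun v hv => by
        rcases List.mem_cons.1 (hNy hyX v hv) with rfl | hv'
        · exact absurd hv G.irrefl
        rcases List.mem_cons.1 hv' with rfl | hvq
        · exact .inl rfl
        · exact .inr (ReachableIn.of_mem_support q hq hvq).symm
      exact ⟨W, hWX, hW⟩

theorem IsHangingAt.exists_neighborSet_eq_singleton [Finite V] (hsep : G.IsEdgeSeparating)
    (hG : G.Connected) (hX : G.IsHangingAt c X) : ∃ y ∈ X, ∃ x, G.neighborSet y = {x} := by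
  induction X using WellFoundedLT.induction generalizing c with
  | _ X ih =>
  rcases hX.exists_neighborSet_eq_or_exists_ssubset hsep hG with ⟨y, hy, h⟩ | ⟨_, -, W, hWX, hW⟩
  · exact ⟨y, hy, c, h⟩
  · obtain ⟨y, hy, x, h⟩ := ih W hWX hW
    exact ⟨y, hWX.1 hy, x, h⟩

theorem IsHangingAt.exists_snail_horn [Finite V] (hsep : G.IsEdgeSeparating) (hG : G.Connected)
    (hX : G.IsHangingAt c X) {y₀ : V} (hy₀ : y₀ ∉ X) (hy₀c : G.neighborSet y₀ = {c}) :
    ∃ x y z : V, y ≠ z ∧ G.neighborSet y = {x} ∧ G.neighborSet z = {x} := by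
  induction X using WellFoundedLT.induction generalizing c y₀ with
  | _ X ih =>
  obtain ⟨y, hyX, x, hyx⟩ := hX.exists_neighborSet_eq_singleton hsep hG
  have hadj : G.Adj y x := by simp [← mem_neighborSet, hyx]
  rcases hX.2.2 y hyX hadj with rfl | hxX
  · exact ⟨x, y₀, y, fun h => hy₀ (h ▸ hyX), hy₀c, hyx⟩
  · obtain ⟨W, hWX, hW, hyW⟩ := hX.exists_ssubset_of_adj hsep hG hadj hyX hxX fun v hv =>
      .inl (by simpa [← mem_neighborSet, hyx] using hv)
    exact ih W hWX hW hyW hyx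

theorem IsEdgeSeparating.exists_snail_horn [Fintype V] (hsep : G.IsEdgeSeparating)
    (hG : G.Connected) (hcard : 3 ≤ Fintype.card V) :
    ∃ x y z : V, y ≠ z ∧ G.neighborSet y = {x} ∧ G.neighborSet z = {x} := by
  classical
  obtain ⟨c⟩ := hG.nonempty
  obtain ⟨w, hw⟩ := Fintype.exists_ne_of_one_lt_card (by omega) c
  obtain ⟨y, -, x, hyx⟩ :=
    (isHangingAt_setOf_reachableIn hw).exists_neighborSet_eq_singleton hsep hG
  obtain ⟨w', -, hw'⟩ := Finset.exists_mem_notMem_of_card_lt_card (s := {y, x}) (t := Finset.univ)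
    (Finset.card_le_two.trans_lt (by rw [Finset.card_univ]; omega))
  simp only [Finset.mem_insert, Finset.mem_singleton, not_or] at hw'
  refine (isHangingAt_setOf_reachableIn hw'.2).exists_snail_horn hsep hG (fun h => hw'.1 ?_) hyx
  refine h.symm.mem_of_forall_adj_mem (T := {y}) rfl fun a ha b hb hab => ?_
  rw [Set.mem_singleton_iff.1 ha, ← mem_neighborSet, hyx] at hab
  exact absurd hab hb

/-- Twice the matching number. -/
noncomputable def maxMatchedVerts (G : SimpleGraph V) : ℕ :=
  sSup {n | ∃ M : G.Subgraph, M.IsMatching ∧ M.verts.ncard = n}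

theorem bddAbove_ncard_verts_isMatching [Finite V] (G : SimpleGraph V) :
    BddAbove {n | ∃ M : G.Subgraph, M.IsMatching ∧ M.verts.ncard = n} :=
  ⟨Nat.card V, by rintro _ ⟨M, -, rfl⟩; exact Set.ncard_le_card _⟩

theorem Subgraph.IsMatching.ncard_verts_le_maxMatchedVerts [Finite V] {M : G.Subgraph}
    (hM : M.IsMatching) : M.verts.ncard ≤ G.maxMatchedVerts :=
  le_csSup (bddAbove_ncard_verts_isMatching G) ⟨M, hM, rfl⟩

theorem exists_isMatching_ncard_verts_eq_maxMatchedVerts [Finite V] (G : SimpleGraph V) :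
    ∃ M : G.Subgraph, M.IsMatching ∧ M.verts.ncard = G.maxMatchedVerts :=
  Nat.sSup_mem ⟨0, by exact ⟨⊥, fun _ hv => hv.elim, Set.ncard_empty V⟩⟩
    (bddAbove_ncard_verts_isMatching G)

theorem maxMatchedVerts_eq_zero [Subsingleton V] (G : SimpleGraph V) : G.maxMatchedVerts = 0 := by
  obtain ⟨M, hM, hM'⟩ := G.exists_isMatching_ncard_verts_eq_maxMatchedVerts
  rw [← hM', Set.ncard_eq_zero, Set.eq_empty_iff_forall_notMem]
  intro v hv
  obtain ⟨w, hvw, -⟩ := hM hv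
  exact G.irrefl (Subsingleton.elim v w ▸ M.adj_sub hvw)

end SimpleGraph

section Deficiency

variable {V : Type*} {G : SimpleGraph V} {u v : V}

theorem deficiency_eq (G : SimpleGraph V) : deficiency G = Nat.card V - G.maxMatchedVerts := rfl

theorem deficiency_le_card (G : SimpleGraph V) : deficiency G ≤ Nat.card V := Nat.sub_le _ _

theorem deficiency_induce_singleton (G : SimpleGraph V) (x : V) :
    deficiency (G.induce {x}) = 1 := by
  rw [deficiency_eq, maxMatchedVerts_eq_zero, Nat.card_unique]

/-- A maximum matching of `G - V(M₀)` together with `M₀` is a matching of `G`. -/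
theorem deficiency_le_deficiency_induce_compl [Finite V] {M₀ : G.Subgraph}
    (hM₀ : M₀.IsMatching) : deficiency G ≤ deficiency (G.induce M₀.vertsᶜ) := by
  set s := M₀.vertsᶜ
  obtain ⟨M, hM, hMcard⟩ := (G.induce s).exists_isMatching_ncard_verts_eq_maxMatchedVerts
  set N := M.map (Embedding.induce s).toHom
  have hN : N.IsMatching := hM.map _ (Embedding.induce (G := G) s).injective
  have hNcard : N.verts.ncard = (G.induce s).maxMatchedVerts := by
    rw [← hMcard]
    exact Set.ncard_image_of_injective _ (Embedding.induce (G := G) s).injective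
  have hdisj : Disjoint N.verts M₀.verts := by
    rw [Subgraph.map_verts, Set.disjoint_left]
    rintro _ ⟨v, -, rfl⟩
    exact v.2
  have hsup := (hN.sup hM₀ (by rwa [hN.support_eq_verts, hM₀.support_eq_verts]))
    |>.ncard_verts_le_maxMatchedVerts
  rw [Subgraph.verts_sup, Set.ncard_union_eq hdisj, hNcard] at hsup
  have hcard : Nat.card s + M₀.verts.ncard = Nat.card V := by
    rw [Nat.card_coe_set_eq, add_comm]
    exact Set.ncard_add_ncard_compl _
  rw [deficiency_eq, deficiency_eq]
  omega

theorem deficiency_le_deficiency_induce_compl_pair [Finite V] (huv : G.Adj u v) :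
    deficiency G ≤ deficiency (G.induce {u, v}ᶜ) :=
  deficiency_le_deficiency_induce_compl (Subgraph.IsMatching.subgraphOfAdj huv)

theorem deficiency_le_card_sub_two [Finite V] (huv : G.Adj u v) :
    deficiency G ≤ Nat.card V - 2 := by
  refine (deficiency_le_deficiency_induce_compl_pair huv).trans ((deficiency_le_card _).trans ?_)
  rw [Nat.card_coe_set_eq, Set.ncard_compl, Set.ncard_pair huv.ne]

theorem isEdgeSeparating_of_deficiency_induce_lt [Finite V]
    (hcrit : ∀ s : Set V, s ≠ Set.univ → (G.induce s).Connected →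
      deficiency (G.induce s) < deficiency G) : G.IsEdgeSeparating := fun _ _ huv hconn =>
  (hcrit _ (Set.compl_ne_univ.2 (Set.insert_nonempty _ _)) hconn).not_ge
    (deficiency_le_deficiency_induce_compl_pair huv)

end Deficiency

theorem stmt_3 {V : Type*} [Fintype V] (G : SimpleGraph V)
    (hconn : G.Connected) (hnontrivial : 2 ≤ Fintype.card V)
    (hcrit : ∀ s : Set V, s ≠ Set.univ → (G.induce s).Connected →
      deficiency (G.induce s) < deficiency G) :
    ∃ x y z : V, y ≠ z ∧ G.neighborSet y = {x} ∧ G.neighborSet z = {x} := by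
  obtain ⟨x, y, hxy⟩ := Fintype.exists_pair_of_one_lt_card hnontrivial
  have hx : ({x} : Set V) ≠ Set.univ := fun h => hxy (h ▸ Set.mem_univ y).symm
  have hdef : 1 < deficiency G := deficiency_induce_singleton G x ▸ hcrit {x} hx (by simp)
  have hadj : G.Adj x (hconn x y).some.snd := Walk.adj_snd (Walk.not_nil_of_ne hxy)
  have hcard := deficiency_le_card_sub_two hadj
  rw [Nat.card_eq_fintype_card] at hcard
  exact (isEdgeSeparating_of_deficiency_induce_lt hcrit).exists_snail_horn hconn (by omega)
end

section
/- Let T_{m,n} (m ≥ 5 odd, n > 3) be the rooted tree whose vertices at distance i from the root form level L_i for 0 ≤ i ≤ m−2, where vertices in even levels L_0, L_2, ..., L_{m−3} have degree n−1, vertices in odd levels L_1, L_3, ..., L_{m−4} have degree 2, and vertices in L_{m−2} are leaves. Then def(T_{m,n}) = (n−1)(n−2)^{(m−3)/2} − 1. -/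
/-!
Root the tree at `r`. Every edge joins consecutive levels, so the vertices at even distance form a
vertex cover and a matching covers at most twice as many vertices as there are even vertices;
sending each even vertex to one of its children attains this bound. Hence the deficiency is
`#odd - #even`. Below the last level `m - 2` every odd vertex has exactly one child, and these
children are precisely the non-root even vertices, so `#odd - #even = #L_{m-2} - 1`. Counting
children level by level gives `#L_{m-2} = (n-1)(n-2)^{(m-3)/2}`.
-/

open SimpleGraph

open Finset

namespace SimpleGraph

variable {V : Type*} {G : SimpleGraph V}

lemma Subgraph.IsMatching.ncard_verts_le_two_mul_of_isVertexCover [Finite V] {M : G.Subgraph}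
    (hM : M.IsMatching) {c : Set V} (hc : G.IsVertexCover c) :
    M.verts.ncard ≤ 2 * c.ncard := by
  classical
  let partner : V → V := fun v => if hv : v ∈ M.verts then (hM hv).choose else v
  have partner_adj : ∀ v ∈ M.verts, M.Adj v (partner v) := fun v hv => by
    simpa [partner, hv] using (hM hv).choose_spec.1
  have h_diff : (M.verts \ c).ncard ≤ c.ncard := by
    refine Set.ncard_le_ncard_of_injOn partner (fun v ⟨hv, hvc⟩ => ?_) ?_
    · exact (hc (M.adj_sub (partner_adj v hv))).resolve_left hvc
    · rintro v ⟨hv, -⟩ w ⟨hw, -⟩ h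
      exact hM.eq_of_adj_right (partner_adj v hv) (h ▸ partner_adj w hw)
  have h_inter : (M.verts ∩ c).ncard ≤ c.ncard := Set.ncard_le_ncard Set.inter_subset_right
  have := Set.ncard_inter_add_ncard_sdiff_eq_ncard M.verts c
  omega

lemma Subgraph.exists_isMatching_ncard_verts_eq_two_mul [Finite V] {s : Set V} (f : s → V)
    (hf : Function.Injective f) (hadj : ∀ v : s, G.Adj v (f v))
    (hdisj : Disjoint s (Set.range f)) :
    ∃ M : G.Subgraph, M.IsMatching ∧ M.verts.ncard = 2 * s.ncard := by
  obtain ⟨M, hverts, hM⟩ :=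
    IsMatching.exists_of_disjoint_sets_of_equiv hdisj (Equiv.ofInjective f hf) hadj
  refine ⟨M, hM, ?_⟩
  rw [hverts, Set.ncard_union_eq hdisj, ← Set.image_univ,
    Set.ncard_image_of_injective _ hf, Set.ncard_univ, Nat.card_coe_set_eq]
  ring

lemma Reachable.exists_adj_dist_add_one_eq {r v : V} (h : G.Reachable r v)
    (hv : 0 < G.dist r v) : ∃ u, G.Adj u v ∧ G.dist r u + 1 = G.dist r v := by
  obtain ⟨p, hp⟩ := h.exists_walk_length_eq_dist
  have hnil : ¬ p.Nil := by
    rw [← Walk.length_eq_zero_iff]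
    omega
  have hadj := p.adj_penultimate hnil
  refine ⟨p.penultimate, hadj, ?_⟩
  have hlen : p.dropLast.length + 1 = p.length := by
    rw [← Walk.length_concat _ hadj, Walk.concat_dropLast]
  have h_le : G.dist r p.penultimate ≤ p.dropLast.length := dist_le _
  have h_tri : G.dist r v ≤ G.dist r p.penultimate + 1 := by
    rcases hadj.diff_dist_adj (u := r) with h | h | h <;> omega
  omega

lemma IsAcyclic.eq_of_adj_of_dist_add_one_eq (hG : G.IsAcyclic) {r u₁ u₂ v : V}
    (h₁ : G.Adj u₁ v) (h₂ : G.Adj u₂ v)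
    (hd₁ : G.dist r u₁ + 1 = G.dist r v) (hd₂ : G.dist r u₂ + 1 = G.dist r v) :
    u₁ = u₂ := by
  have hreach : G.Reachable r v := Reachable.of_dist_ne_zero (by omega)
  -- a geodesic to `u` followed by the edge to `v` is a path, and paths in a forest are unique
  have geodesic_concat : ∀ {u} (h : G.Adj u v), G.dist r u + 1 = G.dist r v →
      ∃ p : G.Path r v, (p : G.Walk r v).penultimate = u := fun {u} h hd => by
    obtain ⟨q, -, hq⟩ := (hreach.trans h.symm.reachable).exists_path_of_dist
    refine ⟨⟨q.concat h, (q.concat h).isPath_of_length_eq_dist ?_⟩, q.penultimate_concat h⟩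
    rw [Walk.length_concat, hq, hd]
  obtain ⟨p₁, rfl⟩ := geodesic_concat h₁ hd₁
  obtain ⟨p₂, rfl⟩ := geodesic_concat h₂ hd₂
  rw [(hG.subsingleton_path r v).elim p₁ p₂]

lemma IsTree.isVertexCover_even_dist (hG : G.IsTree) (r : V) :
    G.IsVertexCover {v | Even (G.dist r v)} := fun v w h => by
  rcases hG.dist_eq_dist_add_one_of_adj r h with h | h <;>
    simp only [Set.mem_ofPred_eq, h, Nat.even_add_one] <;> tauto

section Level

variable [Fintype V]

variable (G) in
noncomputable def level (r : V) (d : ℕ) : Finset V := {v | G.dist r v = d}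

lemma mem_level {r v : V} {d : ℕ} : v ∈ level G r d ↔ G.dist r v = d := by
  simp [level]

lemma Connected.level_zero (hG : G.Connected) (r : V) : level G r 0 = {r} := by
  ext v
  rw [mem_level, hG.dist_eq_zero_iff, mem_singleton, eq_comm]

end Level

section Children

variable [Fintype V] [DecidableRel G.Adj]

variable (G) in
noncomputable def children (r v : V) : Finset V :=
  {w ∈ G.neighborFinset v | G.dist r w = G.dist r v + 1}

lemma mem_children {r v w : V} :
    w ∈ children G r v ↔ G.Adj v w ∧ G.dist r w = G.dist r v + 1 := by
  simp [children]

lemma card_children_self (r : V) : #(children G r r) = (G.neighborSet r).ncard := by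
  rw [Set.ncard_eq_toFinset_card', ← neighborFinset_def]
  congr 1
  ext w
  simp [children, dist_eq_one_iff_adj]

lemma IsTree.card_children_add_one (hG : G.IsTree) {r v : V} (hv : 0 < G.dist r v) :
    #(children G r v) + 1 = (G.neighborSet v).ncard := by
  classical
  obtain ⟨u, hu, hd⟩ := (hG.connected r v).exists_adj_dist_add_one_eq hv
  have hsplit : G.neighborFinset v = insert u (children G r v) := by
    ext w
    simp only [mem_neighborFinset, mem_insert, mem_children]
    refine ⟨fun hw => ?_, ?_⟩
    · rcases hG.dist_eq_dist_add_one_of_adj r hw with h | h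
      · exact .inl (hG.isAcyclic.eq_of_adj_of_dist_add_one_eq hw.symm hu h.symm hd)
      · exact .inr ⟨hw, h⟩
    · rintro (rfl | ⟨hw, -⟩)
      exacts [hu.symm, hw]
  have hu_notMem : u ∉ children G r v := fun h => by
    have := (mem_children.mp h).2
    omega
  rw [Set.ncard_eq_toFinset_card', ← neighborFinset_def, hsplit, card_insert_of_notMem hu_notMem]

lemma IsAcyclic.card_biUnion_children [DecidableEq V] (hG : G.IsAcyclic) (r : V)
    (s : Finset V) : #(s.biUnion (children G r)) = ∑ v ∈ s, #(children G r v) := by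
  refine card_biUnion fun v₁ _ v₂ _ hne => Finset.disjoint_left.mpr fun w hw₁ hw₂ => hne ?_
  rw [mem_children] at hw₁ hw₂
  exact hG.eq_of_adj_of_dist_add_one_eq hw₁.1 hw₂.1 hw₁.2.symm hw₂.2.symm

lemma IsTree.card_level_succ (hG : G.IsTree) (r : V) {d c : ℕ}
    (hc : ∀ v ∈ level G r d, #(children G r v) = c) :
    #(level G r (d + 1)) = c * #(level G r d) := by
  classical
  have hlevel : level G r (d + 1) = (level G r d).biUnion (children G r) := by
    ext w
    simp only [mem_level, mem_biUnion, mem_children]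
    refine ⟨fun hw => ?_, fun ⟨v, hv, _, hw⟩ => hv ▸ hw⟩
    obtain ⟨u, hu, hd⟩ := (hG.connected r w).exists_adj_dist_add_one_eq (by omega)
    exact ⟨u, by omega, hu, by omega⟩
  rw [hlevel, hG.isAcyclic.card_biUnion_children, sum_congr rfl hc, sum_const, smul_eq_mul,
    mul_comm]

lemma IsTree.card_level_two_mul_add_one (hG : G.IsTree) (r : V) {a b k : ℕ}
    (hroot : #(children G r r) = a)
    (heven : ∀ v, 0 < G.dist r v → Even (G.dist r v) → G.dist r v ≤ 2 * k →
      #(children G r v) = b)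
    (hodd : ∀ v, Odd (G.dist r v) → G.dist r v < 2 * k → #(children G r v) = 1) :
    #(level G r (2 * k + 1)) = a * b ^ k := by
  induction k with
  | zero =>
    refine (hG.card_level_succ r (c := a) fun v hv => ?_).trans ?_
    · rw [hG.connected.level_zero, mem_singleton] at hv
      rwa [hv]
    · rw [hG.connected.level_zero, card_singleton, pow_zero]
  | succ k ih =>
    have h_even : #(level G r (2 * k + 3)) = b * #(level G r (2 * k + 2)) :=
      hG.card_level_succ r fun v hv => by
        rw [mem_level] at hv
        exact heven v (by omega) (by rw [hv]; exact ⟨k + 1, by ring⟩) (by omega)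
    have h_odd : #(level G r (2 * k + 2)) = 1 * #(level G r (2 * k + 1)) :=
      hG.card_level_succ r fun v hv => by
        rw [mem_level] at hv
        exact hodd v (by rw [hv]; exact odd_two_mul_add_one k) (by omega)
    rw [show 2 * (k + 1) + 1 = 2 * k + 3 by ring, h_even, h_odd,
      ih (fun v h0 he hle => heven v h0 he (by omega)) (fun v ho hlt => hodd v ho (by omega)),
      pow_succ]
    ring

lemma IsTree.card_even_add_card_level (hG : G.IsTree) (r : V) (k : ℕ)
    (hheight : ∀ v, G.dist r v ≤ 2 * k + 1)
    (hodd : ∀ v, Odd (G.dist r v) → G.dist r v < 2 * k → #(children G r v) = 1) :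
    #{v | Even (G.dist r v)} + #(level G r (2 * k + 1)) = #{v | ¬ Even (G.dist r v)} + 1 := by
  classical
  set inner : Finset V := {v | Odd (G.dist r v) ∧ G.dist r v < 2 * k}
  have h_even : ({v | Even (G.dist r v)} : Finset V) = insert r (inner.biUnion (children G r)) := by
    ext w
    simp only [mem_filter, mem_univ, true_and, mem_insert, mem_biUnion, mem_children, inner]
    refine ⟨fun hw => ?_, ?_⟩
    · rcases (G.dist r w).eq_zero_or_pos with h | h
      · exact .inl (hG.connected.dist_eq_zero_iff.mp h).symm
      · obtain ⟨u, hu, hd⟩ := (hG.connected r w).exists_adj_dist_add_one_eq h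
        have := hheight w
        rw [Nat.even_iff] at hw
        exact .inr ⟨u, ⟨Nat.odd_iff.mpr (by omega), by omega⟩, hu, hd.symm⟩
    · rintro (rfl | ⟨u, ⟨hu, -⟩, -, hd⟩)
      · simp
      · rw [hd, Nat.even_add_one, Nat.not_even_iff_odd]
        exact hu
  have h_root : r ∉ inner.biUnion (children G r) := by
    simp [mem_children]
  have h_odd : ({v | ¬ Even (G.dist r v)} : Finset V) = inner ∪ level G r (2 * k + 1) := by
    ext w
    have := hheight w
    simp only [mem_filter, mem_univ, true_and, mem_union, mem_level, inner,
      Nat.not_even_iff_odd, Nat.odd_iff]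
    omega
  have h_disj : Disjoint inner (level G r (2 * k + 1)) :=
    Finset.disjoint_left.mpr fun v hv hv' => by
      simp only [mem_filter, mem_univ, true_and, mem_level, inner] at hv hv'
      omega
  rw [h_even, h_odd, card_insert_of_notMem h_root, card_union_of_disjoint h_disj,
    hG.isAcyclic.card_biUnion_children, sum_congr rfl fun v hv => hodd v ?_ ?_]
  · simp only [sum_const, smul_eq_mul, mul_one]
    ring
  all_goals simp only [mem_filter, mem_univ, true_and, inner] at hv
  exacts [hv.1, hv.2]

lemma IsTree.deficiency_eq_card_odd_sub_card_even (hG : G.IsTree) (r : V)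
    (hchild : ∀ v, Even (G.dist r v) → (children G r v).Nonempty) :
    deficiency G = #{v | ¬ Even (G.dist r v)} - #{v | Even (G.dist r v)} := by
  set E : Set V := {v | Even (G.dist r v)}
  choose child hchild using hchild
  let f : E → V := fun v => child v v.2
  have hf : ∀ v : E, G.Adj v (f v) ∧ G.dist r (f v) = G.dist r v + 1 :=
    fun v => mem_children.mp (hchild v v.2)
  have hf_inj : Function.Injective f := fun v w h => Subtype.ext <|
    hG.isAcyclic.eq_of_adj_of_dist_add_one_eq (hf v).1 (h ▸ (hf w).1) (hf v).2.symm
      (h ▸ (hf w).2.symm)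
  have hf_disj : Disjoint E (Set.range f) := Set.disjoint_right.mpr fun _ ⟨v, hv⟩ => by
    simp only [E, Set.mem_ofPred_eq, ← hv, (hf v).2, Nat.even_add_one, not_not]
    exact v.2
  have hmax : IsGreatest {k | ∃ M : G.Subgraph, M.IsMatching ∧ M.verts.ncard = k}
      (2 * E.ncard) :=
    ⟨Subgraph.exists_isMatching_ncard_verts_eq_two_mul f hf_inj (fun v => (hf v).1) hf_disj,
      fun _ ⟨_, hM, hk⟩ =>
        hk ▸ hM.ncard_verts_le_two_mul_of_isVertexCover (hG.isVertexCover_even_dist r)⟩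
  have hE : E.ncard = #{v | Even (G.dist r v)} := by
    rw [Set.ncard_eq_toFinset_card', Set.toFinset_ofPred]
  rw [deficiency, hmax.csSup_eq, hE, Nat.card_eq_fintype_card, ← card_univ,
    ← card_filter_add_card_filter_not (fun v => Even (G.dist r v))]
  omega

end Children

end SimpleGraph

theorem stmt_5_general {V : Type*} [Fintype V] (G : SimpleGraph V) (m n : ℕ)
    (hm : 5 ≤ m) (hmodd : Odd m) (hn : 3 < n)
    (htree : G.IsTree) (r : V)
    (hheight : ∀ v, G.dist r v ≤ m - 2)
    (hdeg_even : ∀ v, G.dist r v ≤ m - 3 → Even (G.dist r v) →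
      (G.neighborSet v).ncard = n - 1)
    (hdeg_odd : ∀ v, G.dist r v ≤ m - 4 → Odd (G.dist r v) →
      (G.neighborSet v).ncard = 2) :
    deficiency G = (n - 1) * (n - 2) ^ ((m - 3) / 2) - 1 := by
  classical
  obtain ⟨k, rfl⟩ : ∃ k, m = 2 * k + 3 := by
    obtain ⟨j, rfl⟩ := hmodd
    exact ⟨j - 1, by omega⟩
  have hroot : #(children G r r) = n - 1 := by
    rw [card_children_self, hdeg_even r (by simp) (by simp)]
  have heven : ∀ v, 0 < G.dist r v → Even (G.dist r v) → G.dist r v ≤ 2 * k →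
      #(children G r v) = n - 2 := fun v hpos he hle => by
    have := htree.card_children_add_one hpos
    have := hdeg_even v (by omega) he
    omega
  have hodd : ∀ v, Odd (G.dist r v) → G.dist r v < 2 * k → #(children G r v) = 1 :=
    fun v ho hlt => by
      have := htree.card_children_add_one (r := r) (v := v) (by obtain ⟨j, hj⟩ := ho; omega)
      have := hdeg_odd v (by omega) ho
      omega
  have hchild : ∀ v, Even (G.dist r v) → (children G r v).Nonempty := fun v he => by
    rw [← card_pos]
    rcases (G.dist r v).eq_zero_or_pos with h | h
    · rw [← htree.connected.dist_eq_zero_iff.mp h, hroot]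
      omega
    · have := hheight v
      rw [heven v h he (by obtain ⟨j, hj⟩ := he; omega)]
      omega
  have hcount := htree.card_even_add_card_level r k (fun v => by have := hheight v; omega) hodd
  rw [htree.deficiency_eq_card_odd_sub_card_even r hchild, show (2 * k + 3 - 3) / 2 = k by omega,
    ← htree.card_level_two_mul_add_one r hroot heven hodd]
  omega

/-- any tree realizing the level/degree structure of `T_{m,n}`
(vertices at even distances `0,2,…,m-3` from the root have degree `n-1`,
vertices at odd distances `1,3,…,m-4` have degree `2`, vertices at distance
`m-2` are leaves, and all vertices are within distance `m-2`) has deficiency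
`(n-1)(n-2)^{(m-3)/2} - 1`. -/
theorem stmt_5 {V : Type*} [Fintype V] (G : SimpleGraph V) (m n : ℕ)
    (hm : 5 ≤ m) (hmodd : Odd m) (hn : 3 < n)
    (htree : G.IsTree) (r : V)
    (hheight : ∀ v, G.dist r v ≤ m - 2)
    (hdeg_even : ∀ v, G.dist r v ≤ m - 3 → Even (G.dist r v) →
      (G.neighborSet v).ncard = n - 1)
    (hdeg_odd : ∀ v, G.dist r v ≤ m - 4 → Odd (G.dist r v) →
      (G.neighborSet v).ncard = 2)
    (hdeg_leaf : ∀ v, G.dist r v = m - 2 → (G.neighborSet v).ncard = 1) :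
    deficiency G = (n - 1) * (n - 2) ^ ((m - 3) / 2) - 1 :=
  stmt_5_general G m n hm hmodd hn htree r hheight hdeg_even hdeg_odd
end

section
/- Let G be a connected graph with levelling L_0 = {x_0}, L_1, ..., L_N from x_0, where x_0 has two neighbors x_0^+, x_0^- with N(x_0^+) = N(x_0^-) = {x_0}. If for some i ≥ 2 there exist a vertex u ∈ L_{i-1} and two nonadjacent vertices v, w ∈ N(u) ∩ L_i, then G contains an induced copy of the bone B_i (the tree obtained from a path on i vertices by attaching two pendent edges at each endpoint). -/
/-!
A shortest path `x₀ = P₀, …, P_{i-1} = u` has its vertices on the distinct levels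
`0, …, i - 1`, so it is an induced path, since an edge changes the level by at most one. For the
same reason `v` and `w`, on level `i`, see only `P_{i-1}` on it, while the pendant vertices
`x₀⁺, x₀⁻` see only `P₀ = x₀`. Hence the path together with `x₀⁺, x₀⁻, v, w` induces `B_i`.
-/

open SimpleGraph

/-- The bone `B_i`: the tree obtained from a path on `i` vertices by attaching two
pendent edges at each endpoint (the case `n = 2` of `BS_n^p`). -/
def boneGraph (i : ℕ) : SimpleGraph (Fin i ⊕ (Fin 2 ⊕ Fin 2)) :=
  SimpleGraph.fromRel (fun a b =>
    match a, b with
    | Sum.inl a', Sum.inl b' => (a' : ℕ) + 1 = (b' : ℕ)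
    | Sum.inl a', Sum.inr (Sum.inl _) => (a' : ℕ) = 0
    | Sum.inl a', Sum.inr (Sum.inr _) => (a' : ℕ) = i - 1
    | _, _ => False)

namespace SimpleGraph

variable {V : Type*} {G : SimpleGraph V}

lemma Walk.dist_getVert_of_length_eq_dist {x y : V} (p : G.Walk x y)
    (hp : p.length = G.dist x y) {k : ℕ} (hk : k ≤ p.length) :
    G.dist x (p.getVert k) = k := by
  have hhead : G.dist x (p.getVert k) ≤ k := by simpa [hk] using dist_le (p.take k)
  have htail : G.dist (p.getVert k) y ≤ p.length - k := by simpa using dist_le (p.drop k)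
  have := (p.take k).reachable.dist_triangle_left y
  omega

lemma Walk.adj_getVert_iff_of_length_eq_dist {x y : V} (p : G.Walk x y)
    (hp : p.length = G.dist x y) {j k : ℕ} (hj : j ≤ p.length) (hk : k ≤ p.length) :
    G.Adj (p.getVert j) (p.getVert k) ↔ j + 1 = k ∨ k + 1 = j := by
  refine ⟨fun h => ?_, ?_⟩
  · have hne : j ≠ k := by rintro rfl; exact G.irrefl h
    have := h.diff_dist_adj (u := x)
    rw [p.dist_getVert_of_length_eq_dist hp hj, p.dist_getVert_of_length_eq_dist hp hk] at this
    omega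
  · rintro (rfl | rfl)
    · exact p.adj_getVert_succ (by omega)
    · exact (p.adj_getVert_succ (by omega)).symm

lemma adj_iff_of_neighborSet_eq_singleton {a x z : V} (h : G.neighborSet a = {x}) :
    G.Adj a z ↔ z = x := by
  rw [← mem_neighborSet, h, Set.mem_singleton_iff]

lemma not_adj_of_neighborSet_eq_singleton {a b x : V} (ha : G.neighborSet a = {x})
    (hb : G.neighborSet b = {x}) : ¬ G.Adj a b := by
  intro h
  obtain rfl := (adj_iff_of_neighborSet_eq_singleton ha).1 h
  exact G.irrefl ((adj_iff_of_neighborSet_eq_singleton hb).2 rfl)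

lemma Walk.adj_getVert_iff_of_neighborSet_eq_singleton {x y a : V} (p : G.Walk x y)
    (hp : p.length = G.dist x y) (ha : G.neighborSet a = {x}) {k : ℕ} (hk : k ≤ p.length) :
    G.Adj (p.getVert k) a ↔ k = 0 := by
  rw [adj_comm, adj_iff_of_neighborSet_eq_singleton ha, eq_comm,
    ← (p.take k).reachable.dist_eq_zero_iff, p.dist_getVert_of_length_eq_dist hp hk]

lemma Walk.adj_getVert_iff_of_dist_eq_length_add_one {x y z : V} (p : G.Walk x y)
    (hp : p.length = G.dist x y) (hyz : G.Adj y z) (hz : G.dist x z = p.length + 1) {k : ℕ}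
    (hk : k ≤ p.length) : G.Adj (p.getVert k) z ↔ k = p.length := by
  refine ⟨fun h => ?_, ?_⟩
  · have := h.diff_dist_adj (u := x)
    rw [p.dist_getVert_of_length_eq_dist hp hk] at this
    omega
  · rintro rfl
    rwa [p.getVert_length]

theorem nonempty_boneGraph_embedding {i : ℕ} (hi : 2 ≤ i) (P : Fin i → V) (l r : Fin 2 → V)
    (hP : ∀ j k, G.Adj (P j) (P k) ↔ (j : ℕ) + 1 = k ∨ (k : ℕ) + 1 = j)
    (hPl : ∀ k j, G.Adj (P k) (l j) ↔ (k : ℕ) = 0)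
    (hPr : ∀ k j, G.Adj (P k) (r j) ↔ (k : ℕ) = i - 1)
    (hl : ∀ j j', ¬ G.Adj (l j) (l j')) (hr : ∀ j j', ¬ G.Adj (r j) (r j'))
    (hlr : ∀ j j', ¬ G.Adj (l j) (r j'))
    (hPinj : Function.Injective P) (hlinj : Function.Injective l)
    (hrinj : Function.Injective r) :
    Nonempty (boneGraph i ↪g G) := by
  have hlP : ∀ j k, G.Adj (l j) (P k) ↔ (k : ℕ) = 0 := fun j k => by rw [adj_comm, hPl]
  have hrP : ∀ j k, G.Adj (r j) (P k) ↔ (k : ℕ) = i - 1 := fun j k => by rw [adj_comm, hPr]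
  have hrl : ∀ j j', ¬ G.Adj (r j) (l j') := fun j j' h => hlr j' j h.symm
  -- The adjacency pattern alone keeps the three parts apart.
  have hPl_ne : ∀ k j, P k ≠ l j := by
    intro k j h
    rcases Nat.lt_or_ge (k + 1) i with hk | hk
    · have := (hP k ⟨k + 1, hk⟩).2 (Or.inl rfl)
      rw [h, hlP, Fin.val_mk] at this
      omega
    · exact hlr j 0 (h ▸ (hPr k 0).2 (by omega))
  have hPr_ne : ∀ k j, P k ≠ r j := by
    intro k j h
    rcases Nat.eq_zero_or_pos k with hk | hk
    · exact hrl j 0 (h ▸ (hPl k 0).2 hk)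
    · have := (hP ⟨k - 1, by omega⟩ k).2 (Or.inl (by rw [Fin.val_mk]; omega))
      rw [h, hPr, Fin.val_mk] at this
      omega
  have hlr_ne : ∀ j j', l j ≠ r j' := by
    intro j j' h
    have := (hPl ⟨0, by omega⟩ j).2 rfl
    rw [h, hPr, Fin.val_mk] at this
    omega
  refine ⟨⟨⟨Sum.elim P (Sum.elim l r), hPinj.sumElim (hlinj.sumElim hrinj hlr_ne) ?_⟩, ?_⟩⟩
  · rintro k (j | j)
    exacts [hPl_ne k j, hPr_ne k j]
  rintro (a | b | b) (c | d | d) <;>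
    simp [boneGraph, hP, hPl, hPr, hl, hr, hlr, hlP, hrP, hrl, Fin.ext_iff]
  omega

end SimpleGraph

theorem stmt_10_general {V : Type*} (G : SimpleGraph V)
    (x₀ x₀p x₀m : V)
    (h0p : G.neighborSet x₀p = {x₀}) (h0m : G.neighborSet x₀m = {x₀}) (h0 : x₀p ≠ x₀m)
    (i : ℕ) (hi : 2 ≤ i) (u v w : V)
    (hu : G.dist x₀ u = i - 1) (hv : G.dist x₀ v = i) (hw : G.dist x₀ w = i)
    (huv : G.Adj u v) (huw : G.Adj u w) (hvw : v ≠ w) (hnadj : ¬ G.Adj v w) :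
    Nonempty (boneGraph i ↪g G) := by
  obtain ⟨p, hp⟩ :=
    (Reachable.of_dist_ne_zero (by omega : G.dist x₀ u ≠ 0)).exists_walk_length_eq_dist
  have hlen : p.length = i - 1 := hp.trans hu
  set P : Fin i → V := fun k => p.getVert k
  have hPd : ∀ k, G.dist x₀ (P k) = k := fun k => p.dist_getVert_of_length_eq_dist hp (by omega)
  have hl : ∀ j, G.neighborSet (![x₀p, x₀m] j) = {x₀} := by simp [Fin.forall_fin_two, h0p, h0m]
  have hr : ∀ j, G.Adj u (![v, w] j) ∧ G.dist x₀ (![v, w] j) = i := by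
    simp [Fin.forall_fin_two, hv, hw, huv, huw]
  refine nonempty_boneGraph_embedding hi P ![x₀p, x₀m] ![v, w]
    (fun j k => p.adj_getVert_iff_of_length_eq_dist hp (by omega) (by omega))
    (fun k j => p.adj_getVert_iff_of_neighborSet_eq_singleton hp (hl j) (by omega))
    (fun k j => hlen ▸ p.adj_getVert_iff_of_dist_eq_length_add_one hp (hr j).1
      (by rw [(hr j).2]; omega) (by omega))
    (fun j j' => not_adj_of_neighborSet_eq_singleton (hl j) (hl j'))
    (by simp [Fin.forall_fin_two, hnadj, G.adj_comm w v])
    (fun j j' h => by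
      have := (hr j').2
      rw [(adj_iff_of_neighborSet_eq_singleton (hl j)).1 h, SimpleGraph.dist_self] at this
      omega)
    (fun a b h => Fin.ext (by rw [← hPd a, h, hPd b]))
    (by simp [Function.Injective, Fin.forall_fin_two, h0, h0.symm])
    (by simp [Function.Injective, Fin.forall_fin_two, hvw, hvw.symm])

/-- in a connected graph levelled from a vertex `x₀` having two pendent
neighbors, a vertex `u ∈ L_{i-1}` with two nonadjacent neighbors `v, w ∈ L_i`
produces an induced copy of the bone `B_i`. -/
theorem stmt_10 {V : Type*} [Fintype V] (G : SimpleGraph V) (hconn : G.Connected)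
    (x₀ x₀p x₀m : V)
    (h0p : G.neighborSet x₀p = {x₀}) (h0m : G.neighborSet x₀m = {x₀}) (h0 : x₀p ≠ x₀m)
    (i : ℕ) (hi : 2 ≤ i) (u v w : V)
    (hu : G.dist x₀ u = i - 1) (hv : G.dist x₀ v = i) (hw : G.dist x₀ w = i)
    (huv : G.Adj u v) (huw : G.Adj u w) (hvw : v ≠ w) (hnadj : ¬ G.Adj v w) :
    Nonempty (boneGraph i ↪g G) :=
  stmt_10_general G x₀ x₀p x₀m h0p h0m h0 i hi u v w hu hv hw huv huw hvw hnadj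
end

section
/- A connected graph G with α_l(G) < 3 (i.e., claw-free) satisfies def(G) ≤ 1; equivalently, every connected claw-free graph has a matching missing at most one vertex. -/
/-!
Take a maximum matching `M` and suppose two vertices `a ≠ b` are left exposed; we reach a
contradiction by induction on the length of a walk `a, v, u, …, b`. If `v` is exposed, the edge
`av` enlarges `M`. Otherwise let `w` be the partner of `v`. Claw-freeness at `v` makes two of
`a, u, w` equal or adjacent. If `a = u` or `a ~ u`, the walk shortens. If `a ~ w`, trading `vw`
for `aw` exposes `v`, which is closer to `b`. If `w = u` or `w ~ u`, trading `vw` for `av`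
exposes `w`, which is closer to `b`. Trades keep the size of the matching, so induction applies.
-/

open SimpleGraph

namespace SimpleGraph

variable {V : Type*} {G : SimpleGraph V}

/-- `α_l(G) < 3` in the notation of the paper. -/
def ClawFree (G : SimpleGraph V) : Prop :=
  ∀ (u : V) (S : Set V), S ⊆ G.neighborSet u →
    S.Pairwise (fun a b => ¬ G.Adj a b) → S.ncard < 3

theorem ClawFree.eq_or_adj_of_adj (hG : G.ClawFree) {u a b c : V}
    (ha : G.Adj u a) (hb : G.Adj u b) (hc : G.Adj u c) :
    (a = b ∨ G.Adj a b) ∨ (a = c ∨ G.Adj a c) ∨ (b = c ∨ G.Adj b c) := by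
  by_contra! h
  obtain ⟨⟨hab, hab'⟩, ⟨hac, hac'⟩, ⟨hbc, hbc'⟩⟩ := h
  have hsub : ({a, b, c} : Set V) ⊆ G.neighborSet u := by
    rintro z (rfl | rfl | rfl) <;> assumption
  have hind : ({a, b, c} : Set V).Pairwise (fun s t => ¬ G.Adj s t) := by
    simp only [Set.pairwise_insert, Set.pairwise_singleton, Set.mem_insert_iff,
      Set.mem_singleton_iff, true_and]
    grind [G.adj_symm]
  have := hG u _ hsub hind
  rw [Set.ncard_eq_three.mpr ⟨a, b, c, hab, hac, hbc, rfl⟩] at this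
  omega

theorem exists_walk_length_le_succ_of_eq_or_adj {u v w : V} (h : u = v ∨ G.Adj u v)
    (q : G.Walk v w) : ∃ q' : G.Walk u w, q'.length ≤ q.length + 1 := by
  rcases h with rfl | h
  · exact ⟨q, by omega⟩
  · exact ⟨.cons h q, by simp⟩

namespace Subgraph

variable {M : G.Subgraph}

theorem IsMatching.deleteVerts_pair_s12 (hM : M.IsMatching) {x y : V} (hxy : M.Adj x y) :
    (M.deleteVerts {x, y}).IsMatching := by
  intro v hv
  rw [deleteVerts_verts, Set.mem_sdiff] at hv
  obtain ⟨u, hvu, huniq⟩ := hM hv.1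
  have hu : u ∉ ({x, y} : Set V) := by
    rintro (rfl | rfl)
    · exact hv.2 (.inr (hM.eq_of_adj_left hvu.symm hxy))
    · exact hv.2 (.inl (hM.eq_of_adj_right hvu hxy))
  exact ⟨u, deleteVerts_adj.mpr ⟨hv.1, hv.2, M.edge_vert hvu.symm, hu, hvu⟩,
    fun z hz => huniq z (deleteVerts_adj.mp hz).2.2.2.2⟩

theorem IsMatching.exists_ncard_verts_lt [Finite V] (hM : M.IsMatching) {a c : V}
    (hac : G.Adj a c) (ha : a ∉ M.verts) (hc : c ∉ M.verts) :
    ∃ M' : G.Subgraph, M'.IsMatching ∧ M.verts.ncard < M'.verts.ncard := by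
  have hdisj : Disjoint M.verts {a, c} := by
    rw [Set.disjoint_right]
    rintro x (rfl | rfl) <;> assumption
  refine ⟨M ⊔ G.subgraphOfAdj hac, hM.sup (.subgraphOfAdj hac) ?_, ?_⟩
  · rwa [hM.support_eq_verts, (IsMatching.subgraphOfAdj hac).support_eq_verts,
      subgraphOfAdj_verts]
  · rw [verts_sup, subgraphOfAdj_verts, Set.ncard_union_eq hdisj, Set.ncard_pair hac.ne]
    omega

theorem IsMatching.exists_exchange (hM : M.IsMatching) {x y a : V} (hxy : M.Adj x y)
    (ha : a ∉ M.verts) (hax : G.Adj a x) :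
    ∃ M' : G.Subgraph, M'.IsMatching ∧ M'.verts = insert a (M.verts \ {y}) := by
  have hdisj : Disjoint (M.verts \ {x, y}) {a, x} := by
    rw [Set.disjoint_right]
    rintro z (rfl | rfl) hz
    exacts [ha hz.1, hz.2 (.inl rfl)]
  refine ⟨M.deleteVerts {x, y} ⊔ G.subgraphOfAdj hax,
    (hM.deleteVerts_pair_s12 hxy).sup (.subgraphOfAdj hax) ?_, ?_⟩
  · rwa [(hM.deleteVerts_pair_s12 hxy).support_eq_verts,
      (IsMatching.subgraphOfAdj hax).support_eq_verts, subgraphOfAdj_verts, deleteVerts_verts]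
  · have hx : x ∈ M.verts := M.edge_vert hxy
    have hxy' : x ≠ y := (M.adj_sub hxy).ne
    ext z
    simp only [verts_sup, deleteVerts_verts, subgraphOfAdj_verts, Set.mem_union, Set.mem_sdiff,
      Set.mem_insert_iff, Set.mem_singleton_iff]
    grind

end Subgraph

theorem ClawFree.exists_isMatching_ncard_verts_lt [Finite V] (hG : G.ClawFree)
    {M : G.Subgraph} (hM : M.IsMatching) {a b : V} (ha : a ∉ M.verts) (hb : b ∉ M.verts)
    (hab : a ≠ b) (p : G.Walk a b) :
    ∃ M' : G.Subgraph, M'.IsMatching ∧ M.verts.ncard < M'.verts.ncard := by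
  match p with
  | .nil => exact absurd rfl hab
  | .cons hav .nil => exact hM.exists_ncard_verts_lt hav ha hb
  | .cons (v := v) hav (.cons (v := u) hvu q) =>
    by_cases hv : v ∈ M.verts
    case neg => exact hM.exists_ncard_verts_lt hav ha hv
    obtain ⟨w, hvw, -⟩ := hM hv
    have hw : w ∈ M.verts := M.edge_vert hvw.symm
    rcases hG.eq_or_adj_of_adj hav.symm hvu (M.adj_sub hvw) with hau | haw | huw
    · obtain ⟨q', hq'⟩ := exists_walk_length_le_succ_of_eq_or_adj hau q
      exact hG.exists_isMatching_ncard_verts_lt hM ha hb hab q'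
    · rcases haw with rfl | haw
      · exact absurd hw ha
      obtain ⟨M', hM', hverts⟩ := hM.exists_exchange hvw.symm ha haw
      have hv' : v ∉ M'.verts := by simp [hverts, hav.ne']
      have hb' : b ∉ M'.verts := by simp [hverts, hb, Ne.symm hab]
      have hvb : v ≠ b := ne_of_mem_of_not_mem hv hb
      rw [← Set.ncard_exchange ha hv, ← hverts]
      exact hG.exists_isMatching_ncard_verts_lt hM' hv' hb' hvb (.cons hvu q)
    · obtain ⟨M', hM', hverts⟩ := hM.exists_exchange hvw ha hav
      have hw' : w ∉ M'.verts := by simp [hverts, ne_of_mem_of_not_mem hw ha]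
      have hb' : b ∉ M'.verts := by simp [hverts, hb, Ne.symm hab]
      have hwb : w ≠ b := ne_of_mem_of_not_mem hw hb
      obtain ⟨q', hq'⟩ :=
        exists_walk_length_le_succ_of_eq_or_adj (huw.imp Eq.symm G.adj_symm) q
      rw [← Set.ncard_exchange ha hw, ← hverts]
      exact hG.exists_isMatching_ncard_verts_lt hM' hw' hb' hwb q'
termination_by p.length

theorem exists_isMatching_forall_ncard_verts_le [Finite V] (G : SimpleGraph V) :
    ∃ M : G.Subgraph, M.IsMatching ∧
      ∀ M' : G.Subgraph, M'.IsMatching → M'.verts.ncard ≤ M.verts.ncard := by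
  have hbot : (⊥ : G.Subgraph).IsMatching := fun _ hv => absurd hv (Set.notMem_empty _)
  simpa using Set.exists_max_image {M : G.Subgraph | M.IsMatching} (·.verts.ncard)
    (Set.toFinite _) ⟨⊥, hbot⟩

end SimpleGraph

theorem deficiency_eq_ncard_compl_verts {V : Type*} [Finite V] {G : SimpleGraph V}
    {M : G.Subgraph} (hM : M.IsMatching)
    (hmax : ∀ M' : G.Subgraph, M'.IsMatching → M'.verts.ncard ≤ M.verts.ncard) :
    deficiency G = M.vertsᶜ.ncard := by
  have hgreatest : IsGreatest {n | ∃ M : G.Subgraph, M.IsMatching ∧ M.verts.ncard = n}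
      M.verts.ncard := ⟨⟨M, hM, rfl⟩, by rintro _ ⟨M', hM', rfl⟩; exact hmax M' hM'⟩
  rw [deficiency, hgreatest.csSup_eq, ← Set.ncard_add_ncard_compl M.verts,
    Nat.add_sub_cancel_left]

/-- every connected claw-free graph (no vertex has an independent
set of size 3 in its neighborhood, i.e. `α_l(G) < 3`) has deficiency at most 1. -/
theorem stmt_12 {V : Type*} [Fintype V] (G : SimpleGraph V) (hconn : G.Connected)
    (hclawfree : ∀ (u : V) (S : Set V), S ⊆ G.neighborSet u →
      S.Pairwise (fun a b => ¬ G.Adj a b) → S.ncard < 3) :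
    deficiency G ≤ 1 := by
  obtain ⟨M, hM, hmax⟩ := G.exists_isMatching_forall_ncard_verts_le
  rw [deficiency_eq_ncard_compl_verts hM hmax, Set.ncard_le_one_iff]
  intro a b ha hb
  by_contra hab
  obtain ⟨M', hM', hlt⟩ :=
    ClawFree.exists_isMatching_ncard_verts_lt hclawfree hM ha hb hab (hconn a b).some
  exact (hmax M' hM').not_gt hlt
end

section
/- For every graph G, the deficiency def(G) = |V(G)| − 2ν(G) (where ν is the maximum matching number) has the same parity as |V(G)|; in particular, if G is connected claw-free with an even number of vertices, then G has a perfect matching. -/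
/-!
A matching covers an even number of vertices, so `|V| - 2ν(G) ≡ |V| (mod 2)`.

Sumner's theorem goes by induction on `|V|`: it suffices to find an edge `ab` such that
`G - {a, b}`, which is again claw-free, stays connected. Fix `r` and a vertex `v` farthest from
`r`, at distance `d`. If two adjacent vertices lie at distance `d`, remove them: every other
vertex keeps a shortest path to `r`. Otherwise remove `v` and its predecessor `u` on a geodesic
from `r`. A vertex whose shortest paths all pass through `u` would be a neighbour `z` of `u` at
distance `d`, and then `u` with `v`, `z` and its own predecessor would be a claw. When `u = r`,
the claw at `r` leaves at most one vertex besides `r` and `v`.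
-/

open SimpleGraph

namespace SimpleGraph

variable {V : Type*} {G : SimpleGraph V}

def IsClawFree (G : SimpleGraph V) : Prop :=
  ∀ ⦃u a b c : V⦄, G.Adj u a → G.Adj u b → G.Adj u c → a ≠ b → a ≠ c → b ≠ c →
    G.Adj a b ∨ G.Adj a c ∨ G.Adj b c

lemma isClawFree_of_forall_ncard_lt_three
    (h : ∀ (u : V) (S : Set V), S ⊆ G.neighborSet u →
      S.Pairwise (fun a b => ¬ G.Adj a b) → S.ncard < 3) :
    G.IsClawFree := by
  intro u a b c ha hb hc hab hac hbc
  by_contra! hind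
  have hS := h u {a, b, c} (by simp [Set.insert_subset_iff, ha, hb, hc]) ?_
  · rw [Set.ncard_eq_three.mpr ⟨a, b, c, hab, hac, hbc, rfl⟩] at hS
    exact hS.false
  · simp only [Set.pairwise_insert, Set.pairwise_singleton, Set.mem_insert_iff,
      Set.mem_singleton_iff]
    grind [G.adj_symm]

lemma IsClawFree.comap {W : Type*} {G : SimpleGraph W} (hG : G.IsClawFree) (f : V ↪ W) :
    (G.comap f).IsClawFree := fun _ _ _ _ ha hb hc hab hac hbc =>
  hG ha hb hc (f.injective.ne hab) (f.injective.ne hac) (f.injective.ne hbc)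

lemma IsClawFree.induce (hG : G.IsClawFree) (s : Set V) : (G.induce s).IsClawFree :=
  hG.comap _

lemma Adj.dist_le_dist_add_one {v w : V} (h : G.Adj v w) (u : V) :
    G.dist u w ≤ G.dist u v + 1 := by
  simpa [dist_eq_one_iff_adj.mpr h] using h.reachable.dist_triangle_right u

lemma Reachable.exists_adj_dist_add_one {r z : V} (h : G.Reachable r z) (hrz : r ≠ z) :
    ∃ y, G.Adj z y ∧ G.dist r y + 1 = G.dist r z := by
  obtain ⟨p, hp⟩ := h.symm.exists_walk_length_eq_dist
  have hnil : ¬ p.Nil := by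
    rw [← Walk.length_eq_zero_iff, hp, dist_comm]
    exact (h.dist_eq_zero_iff.not).mpr hrz
  refine ⟨p.snd, p.adj_snd hnil, le_antisymm ?_ ?_⟩
  · have := dist_le p.tail
    have := p.length_tail_add_one hnil
    rw [dist_comm (u := r), dist_comm (u := r)]
    omega
  · exact (p.adj_snd hnil).symm.dist_le_dist_add_one r

lemma preconnected_induce_of_exists_adj_dist_lt {s : Set V} {r : V} (hr : r ∈ s)
    (h : ∀ z ∈ s, z ≠ r → ∃ y ∈ s, G.Adj z y ∧ G.dist r y < G.dist r z) :
    (G.induce s).Preconnected := by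
  suffices hreach : ∀ z : s, (G.induce s).Reachable z ⟨r, hr⟩ from
    fun x y => (hreach x).trans (hreach y).symm
  intro z
  induction hz : G.dist r z using Nat.strong_induction_on generalizing z with
  | _ n ih =>
    obtain ⟨z, hzs⟩ := z
    by_cases hzr : z = r
    · subst hzr; rfl
    obtain ⟨y, hys, hzy, hlt⟩ := h z hzs hzr
    exact (Adj.reachable (G := G.induce s) (u := ⟨z, hzs⟩) (v := ⟨y, hys⟩) hzy).trans
      (ih _ (hz ▸ hlt) ⟨y, hys⟩ rfl)

lemma Subgraph.IsPerfectMatching.map_induce_sup_subgraphOfAdj {a b : V} (hab : G.Adj a b)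
    {M : (G.induce {a, b}ᶜ).Subgraph} (hM : M.IsPerfectMatching) :
    (M.map (Embedding.induce _).toHom ⊔ G.subgraphOfAdj hab).IsPerfectMatching := by
  refine ⟨hM.1.map _ (Embedding.induce (G := G) _).injective |>.sup (.subgraphOfAdj hab) ?_, ?_⟩
  · refine Set.disjoint_of_subset (Subgraph.support_subset_verts _)
      (Subgraph.support_subset_verts _) ?_
    rw [Subgraph.map_verts, subgraphOfAdj_verts, Set.disjoint_left]
    rintro _ ⟨x, -, rfl⟩
    exact x.prop
  · intro x
    rw [Subgraph.verts_sup, Subgraph.map_verts, subgraphOfAdj_verts, hM.2.verts_eq_univ]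
    by_cases hx : x ∈ ({a, b} : Set V)
    · exact .inr hx
    · exact .inl ⟨⟨x, hx⟩, trivial, rfl⟩

lemma preconnected_induce_compl_pair_of_dist_eq_max (hG : G.Preconnected) {r a b : V}
    (hmax : ∀ z, G.dist r z ≤ G.dist r a) (hb : G.dist r b = G.dist r a) (hra : r ≠ a) :
    (G.induce {a, b}ᶜ).Preconnected := by
  have hpos : G.dist r a ≠ 0 := (hG r a).dist_eq_zero_iff.not.mpr hra
  refine preconnected_induce_of_exists_adj_dist_lt (r := r) ?_ fun z _ hzr => ?_
  · simp only [Set.mem_compl_iff, Set.mem_insert_iff, Set.mem_singleton_iff, not_or]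
    refine ⟨hra, ?_⟩
    rintro rfl
    simp only [dist_self] at hb
    exact hpos hb.symm
  obtain ⟨y, hzy, hy⟩ := (hG r z).exists_adj_dist_add_one (Ne.symm hzr)
  have := hmax z
  refine ⟨y, ?_, hzy, by omega⟩
  simp only [Set.mem_compl_iff, Set.mem_insert_iff, Set.mem_singleton_iff, not_or]
  constructor <;> rintro rfl <;> omega

section FarthestVertex

variable {r u v : V}

lemma IsClawFree.subsingleton_compl_pair_of_far (hcf : G.IsClawFree) (hG : G.Preconnected)
    (hmax : ∀ z, G.dist r z ≤ G.dist r v)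
    (hfar : ∀ a b, G.dist r a = G.dist r v → G.dist r b = G.dist r v → ¬ G.Adj a b)
    (hrv : G.Adj r v) : ({r, v}ᶜ : Set V).Subsingleton := by
  have hnbr : ∀ z ∈ ({r, v}ᶜ : Set V), G.Adj r z ∧ G.dist r z = G.dist r v := by
    intro z hz
    simp only [Set.mem_compl_iff, Set.mem_insert_iff, Set.mem_singleton_iff, not_or] at hz
    have hpos : G.dist r z ≠ 0 := (hG r z).dist_eq_zero_iff.not.mpr (Ne.symm hz.1)
    have h1 : G.dist r z = 1 := by
      have := hmax z
      rw [dist_eq_one_iff_adj.mpr hrv] at this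
      omega
    exact ⟨dist_eq_one_iff_adj.mp h1, h1.trans (dist_eq_one_iff_adj.mpr hrv).symm⟩
  intro z hz w hw
  by_contra hzw
  have hzv : v ≠ z := fun h => hz (.inr h.symm)
  have hwv : v ≠ w := fun h => hw (.inr h.symm)
  obtain ⟨hrz, hdz⟩ := hnbr z hz
  obtain ⟨hrw, hdw⟩ := hnbr w hw
  rcases hcf hrv hrz hrw hzv hwv hzw with h | h | h
  · exact hfar v z rfl hdz h
  · exact hfar v w rfl hdw h
  · exact hfar z w hdz hdw h

lemma IsClawFree.preconnected_induce_compl_pair_of_far (hcf : G.IsClawFree)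
    (hG : G.Preconnected) (hmax : ∀ z, G.dist r z ≤ G.dist r v)
    (hfar : ∀ a b, G.dist r a = G.dist r v → G.dist r b = G.dist r v → ¬ G.Adj a b)
    (huv : G.Adj u v) (hu : G.dist r u + 1 = G.dist r v) (hur : u ≠ r) :
    (G.induce {u, v}ᶜ).Preconnected := by
  obtain ⟨p, hup, hp⟩ := (hG r u).exists_adj_dist_add_one hur.symm
  have hfar_nbr : ∀ z, G.Adj u z → z ≠ v → G.dist r z ≠ G.dist r v := by
    intro z huz hzv hz
    have hpv := hup.symm.dist_le_dist_add_one r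
    rcases hcf hup huv huz (by rintro rfl; omega) (by rintro rfl; omega) hzv.symm
      with h | h | h
    · have := h.dist_le_dist_add_one r
      omega
    · have := h.dist_le_dist_add_one r
      omega
    · exact hfar v z rfl hz h
  refine preconnected_induce_of_exists_adj_dist_lt (r := r) ?_ fun z hz hzr => ?_
  · simp only [Set.mem_compl_iff, Set.mem_insert_iff, Set.mem_singleton_iff, not_or]
    refine ⟨hur.symm, ?_⟩
    rintro rfl
    simp at hu
  simp only [Set.mem_compl_iff, Set.mem_insert_iff, Set.mem_singleton_iff, not_or] at hz
  obtain ⟨y, hzy, hy⟩ := (hG r z).exists_adj_dist_add_one (Ne.symm hzr)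
  have := hmax z
  refine ⟨y, ?_, hzy, by omega⟩
  simp only [Set.mem_compl_iff, Set.mem_insert_iff, Set.mem_singleton_iff, not_or]
  refine ⟨?_, by rintro rfl; omega⟩
  rintro rfl
  exact hfar_nbr z hzy.symm hz.2 (by omega)

end FarthestVertex

lemma IsClawFree.exists_adj_preconnected_induce_compl_pair [Finite V] [Nontrivial V]
    (hcf : G.IsClawFree) (hG : G.Preconnected) :
    ∃ a b, G.Adj a b ∧ (G.induce {a, b}ᶜ).Preconnected := by
  obtain ⟨r⟩ := (inferInstance : Nonempty V)
  obtain ⟨v, hmax⟩ := Finite.exists_max (G.dist r)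
  have hrv : r ≠ v := by
    rintro rfl
    obtain ⟨z, hzr⟩ := exists_ne r
    have := hmax z
    simp only [dist_self, nonpos_iff_eq_zero] at this
    exact hzr ((hG r z).dist_eq_zero_iff.mp this).symm
  by_cases! hpair : ∃ a b, G.dist r a = G.dist r v ∧ G.dist r b = G.dist r v ∧ G.Adj a b
  · obtain ⟨a, b, ha, hb, hab⟩ := hpair
    refine ⟨a, b, hab, preconnected_induce_compl_pair_of_dist_eq_max hG (ha ▸ hmax)
      (hb.trans ha.symm) ?_⟩
    rintro rfl
    simp only [dist_self] at ha
    exact (hG r v).dist_eq_zero_iff.not.mpr hrv ha.symm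
  obtain ⟨u, hvu, hu⟩ := (hG r v).exists_adj_dist_add_one hrv
  refine ⟨u, v, hvu.symm, ?_⟩
  by_cases hur : u = r
  · subst hur
    have := (hcf.subsingleton_compl_pair_of_far hG hmax hpair hvu.symm).coe_sort
    exact Preconnected.of_subsingleton
  · exact hcf.preconnected_induce_compl_pair_of_far hG hmax hpair hvu.symm hu hur

theorem IsClawFree.exists_isPerfectMatching [Finite V] (hcf : G.IsClawFree)
    (hG : G.Preconnected) (heven : Even (Nat.card V)) : ∃ M : G.Subgraph, M.IsPerfectMatching := by
  induction hn : Nat.card V using Nat.strong_induction_on generalizing V with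
  | _ n ih =>
  rcases subsingleton_or_nontrivial V with hV | hV
  · have : IsEmpty V := by
      have := Finite.card_le_one_iff_subsingleton.mpr hV
      obtain ⟨k, hk⟩ := heven
      exact Finite.card_eq_zero_iff.mp (by omega)
    exact ⟨⊥, fun v => isEmptyElim v, fun v => isEmptyElim v⟩
  obtain ⟨a, b, hab, hpre⟩ := hcf.exists_adj_preconnected_induce_compl_pair hG
  have hcard : Nat.card ({a, b}ᶜ : Set V) + 2 = n := by
    have := Set.ncard_le_card ({a, b} : Set V)
    rw [Set.ncard_pair hab.ne] at this
    rw [Nat.card_coe_set_eq, Set.ncard_compl, Set.ncard_pair hab.ne]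
    omega
  have heven' : Even (Nat.card ({a, b}ᶜ : Set V)) :=
    (Nat.even_add.mp (hcard ▸ hn ▸ heven)).mpr even_two
  obtain ⟨M, hM⟩ := ih _ (by omega) (hcf.induce _) hpre heven' rfl
  exact ⟨_, hM.map_induce_sup_subgraphOfAdj hab⟩

lemma Subgraph.IsMatching.even_ncard_verts {M : G.Subgraph} [Finite M.verts]
    (hM : M.IsMatching) : Even M.verts.ncard := by
  have := Fintype.ofFinite M.verts
  rw [Set.ncard_eq_toFinset_card']
  exact hM.even_card

lemma exists_isMatching_ncard_verts_eq_sSup [Finite V] (G : SimpleGraph V) :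
    ∃ M : G.Subgraph, M.IsMatching ∧
      M.verts.ncard = sSup {n | ∃ M : G.Subgraph, M.IsMatching ∧ M.verts.ncard = n} := by
  refine Nat.sSup_mem (s := {n | ∃ M : G.Subgraph, M.IsMatching ∧ M.verts.ncard = n})
    ⟨0, ⊥, fun _ hv => hv.elim, Set.ncard_empty V⟩ ⟨Nat.card V, ?_⟩
  rintro _ ⟨M, -, rfl⟩
  exact Set.ncard_le_card _

end SimpleGraph

lemma deficiency_mod_two {V : Type*} [Finite V] (G : SimpleGraph V) :
    deficiency G % 2 = Nat.card V % 2 := by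
  obtain ⟨M, hM, hcard⟩ := G.exists_isMatching_ncard_verts_eq_sSup
  obtain ⟨k, hk⟩ := hM.even_ncard_verts
  have hle := Set.ncard_le_card M.verts
  rw [deficiency, ← hcard]
  omega

/-- the deficiency of a graph has the same parity as its number of
vertices; in particular a connected claw-free graph on an even number of vertices
has a perfect matching. -/
theorem stmt_13 {V : Type*} [Fintype V] (G : SimpleGraph V) :
    deficiency G % 2 = Fintype.card V % 2 ∧
    (G.Connected →
      (∀ (u : V) (S : Set V), S ⊆ G.neighborSet u →
        S.Pairwise (fun a b => ¬ G.Adj a b) → S.ncard < 3) →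
      Even (Fintype.card V) →
      ∃ M : G.Subgraph, M.IsPerfectMatching) := by
  rw [← Nat.card_eq_fintype_card]
  exact ⟨deficiency_mod_two G, fun hG hcf heven =>
    (isClawFree_of_forall_ncard_lt_three hcf).exists_isPerfectMatching hG.preconnected heven⟩
end
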